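/- arXiv:2601.20603 — 3 statements merged into one kernel-verified Lean document; each statement's English description precedes it below -/
import Mathlib

section
/- Let F = Σ_α c_α z^α be a formal power series in n complex variables (c : (multi-indices α ∈ ℕⁿ) → ℂ). If for every v ∈ ℂⁿ the one-variable power series Σ_{k≥0} ( Σ_{|α|=k} c_α v^α ) λ^k has positive radius of convergence, then F is convergent: there exists r > 0 such that Σ_α |c_α| r^{|α|} < ∞. -/
/-! The homogeneous parts `P_k` of `F` are continuous, and the hypothesis bounds `‖P_k v‖` by
`C_v R_v ^ k` at every point `v`. By Baire's theorem a single pair `(C, R)` works on a whole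
polydisc around some `v₀`. Averaging `P_k` over the torus `v₀ + d ζ^j`, `ζ` a primitive
`(k+1)`-st root of unity, against `ζ^(-j·α)` isolates `c_α d^k` (the centre drops out because
`P_k` is homogeneous of degree `k`), so `‖c_α‖ d^|α| ≤ C R^|α|` and `F` converges on the
polydisc of radius `d / (2R)`. -/

open Finset Polynomial

/-- The `k`-th coefficient of the restriction of `∑ c α z^α` to the line `ℂ v`. -/
def homogeneousPart {R : Type*} [CommSemiring R] {n : ℕ} (c : (Fin n → ℕ) → R) (k : ℕ)
    (v : Fin n → R) : R :=
  ∑ α ∈ Finset.Nat.antidiagonalTuple n k, c α * ∏ i, v i ^ α i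

theorem continuous_homogeneousPart {R : Type*} [CommSemiring R] [TopologicalSpace R]
    [IsTopologicalSemiring R] {n : ℕ} (c : (Fin n → ℕ) → R) (k : ℕ) :
    Continuous (homogeneousPart c k) := by
  unfold homogeneousPart
  fun_prop

theorem Finset.exists_lt_of_sum_eq_of_ne {ι : Type*} {s : Finset ι} {f g : ι → ℕ}
    (hsum : ∑ i ∈ s, f i = ∑ i ∈ s, g i) (hne : ∃ i ∈ s, f i ≠ g i) : ∃ i ∈ s, f i < g i := by
  by_contra! h
  obtain ⟨i, hi, hfg⟩ := hne
  have := Finset.sum_lt_sum h ⟨i, hi, lt_of_le_of_ne (h i hi) hfg.symm⟩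
  omega

namespace IsPrimitiveRoot

variable {K : Type*} [Field K] {N : ℕ} {ζ : K}

theorem sum_range_pow_mul (hζ : IsPrimitiveRoot ζ N) (d : ℕ) :
    ∑ j ∈ range N, ζ ^ (j * d) = if N ∣ d then (N : K) else 0 := by
  simp_rw [mul_comm _ d, pow_mul]
  split_ifs with h
  · simp [(hζ.pow_eq_one_iff_dvd d).2 h]
  · have hne : ζ ^ d ≠ 1 := mt (hζ.pow_eq_one_iff_dvd d).1 h
    rw [geom_sum_eq hne, ← pow_mul, mul_comm, pow_mul, hζ.pow_eq_one, one_pow, sub_self,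
      zero_div]

theorem sum_range_eval_mul_pow (hζ : IsPrimitiveRoot ζ N) {p : K[X]} (hp : p.natDegree < N)
    {a : ℕ} (ha : a < N) (d : K) :
    ∑ j ∈ range N, p.eval (d * ζ ^ j) * ζ ^ (j * (N - a)) = N * (p.coeff a * d ^ a) := by
  have hdvd : ∀ m ∈ range N, N ∣ m + (N - a) ↔ m = a := by
    intro m hm
    rw [mem_range] at hm
    refine ⟨fun h => ?_, fun h => by simp [h, Nat.add_sub_cancel' ha.le]⟩
    have := Nat.eq_of_dvd_of_lt_two_mul (by omega) h (by omega)
    omega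
  calc ∑ j ∈ range N, p.eval (d * ζ ^ j) * ζ ^ (j * (N - a))
      = ∑ m ∈ range N, p.coeff m * d ^ m * ∑ j ∈ range N, ζ ^ (j * (m + (N - a))) := by
        simp_rw [eval_eq_sum_range' hp, sum_mul, mul_sum]
        rw [sum_comm]
        refine sum_congr rfl fun m _ => sum_congr rfl fun j _ => ?_
        ring
    _ = N * (p.coeff a * d ^ a) := by
        rw [sum_congr rfl fun m hm => by rw [hζ.sum_range_pow_mul, if_congr (hdvd m hm) rfl rfl]]
        simp [mem_range.2 ha, mul_comm]

theorem sum_range_add_mul_pow_mul_pow (hζ : IsPrimitiveRoot ζ N) (x d : K) {a b : ℕ}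
    (ha : a < N) (hb : b < N) :
    ∑ j ∈ range N, (x + d * ζ ^ j) ^ b * ζ ^ (j * (N - a))
      = N * (x ^ (b - a) * b.choose a * d ^ a) := by
  have hdeg : ((X + C x) ^ b).natDegree < N := by
    rwa [natDegree_pow, natDegree_X_add_C, mul_one]
  simpa [coeff_X_add_C_pow, add_comm] using hζ.sum_range_eval_mul_pow hdeg ha d

variable {n k : ℕ}

theorem sum_piFinset_prod_add_mul_pow_mul_pow (hζ : IsPrimitiveRoot ζ N) (v : Fin n → K)
    (d : K) {α β : Fin n → ℕ} (hα : ∀ i, α i < N) (hβ : ∀ i, β i < N)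
    (hsum : ∑ i, α i = ∑ i, β i) :
    ∑ j ∈ Fintype.piFinset fun _ => range N,
        ∏ i, (v i + d * ζ ^ j i) ^ β i * ζ ^ (j i * (N - α i))
      = if β = α then (N : K) ^ n * d ^ ∑ i, α i else 0 := by
  rw [← prod_univ_sum (fun _ => range N)
    (fun i s => (v i + d * ζ ^ s) ^ β i * ζ ^ (s * (N - α i)))]
  simp_rw [hζ.sum_range_add_mul_pow_mul_pow _ _ (hα _) (hβ _)]
  split_ifs with h
  · subst h
    simp [prod_mul_distrib, prod_pow_eq_pow_sum]
  · obtain ⟨i, -, hi⟩ := exists_lt_of_sum_eq_of_ne hsum.symm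
      (by simpa [funext_iff] using h)
    exact prod_eq_zero (mem_univ i) (by simp [Nat.choose_eq_zero_of_lt hi])

theorem sum_piFinset_homogeneousPart_mul (hζ : IsPrimitiveRoot ζ (k + 1))
    (c : (Fin n → ℕ) → K) (v : Fin n → K) (d : K) {α : Fin n → ℕ}
    (hα : α ∈ Finset.Nat.antidiagonalTuple n k) :
    ∑ j ∈ Fintype.piFinset fun _ => range (k + 1),
        homogeneousPart c k (fun i => v i + d * ζ ^ j i) * ∏ i, ζ ^ (j i * (k + 1 - α i))
      = (k + 1 : K) ^ n * (c α * d ^ k) := by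
  have hlt : ∀ β ∈ Finset.Nat.antidiagonalTuple n k, ∀ i, β i < k + 1 := fun β hβ i =>
    Nat.lt_succ_of_le (Finset.Nat.mem_antidiagonalTuple.1 hβ ▸
      single_le_sum (fun _ _ => Nat.zero_le _) (mem_univ i))
  calc _ = ∑ β ∈ Finset.Nat.antidiagonalTuple n k,
        c β * ∑ j ∈ Fintype.piFinset fun _ => range (k + 1),
          ∏ i, (v i + d * ζ ^ j i) ^ β i * ζ ^ (j i * (k + 1 - α i)) := by
        simp_rw [homogeneousPart, sum_mul, mul_sum, mul_assoc, ← prod_mul_distrib]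
        exact sum_comm
    _ = (k + 1 : K) ^ n * (c α * d ^ k) := by
        rw [sum_eq_single_of_mem α hα fun β hβ hne => ?_]
        · rw [hζ.sum_piFinset_prod_add_mul_pow_mul_pow v d (hlt α hα) (hlt α hα) rfl, if_pos rfl,
            (Finset.Nat.mem_antidiagonalTuple.1 hα)]
          push_cast
          ring
        · have hsum : ∑ i, α i = ∑ i, β i := (Finset.Nat.mem_antidiagonalTuple.1 hα).trans
            (Finset.Nat.mem_antidiagonalTuple.1 hβ).symm
          rw [hζ.sum_piFinset_prod_add_mul_pow_mul_pow v d (hlt α hα) (hlt β hβ) hsum, if_neg hne,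
            mul_zero]

end IsPrimitiveRoot

theorem norm_mul_pow_le_of_forall_homogeneousPart_le {n k : ℕ} {c : (Fin n → ℕ) → ℂ}
    {v : Fin n → ℂ} {d B : ℝ} (hd : 0 ≤ d)
    (hB : ∀ w ∈ Metric.closedBall v d, ‖homogeneousPart c k w‖ ≤ B) {α : Fin n → ℕ}
    (hα : α ∈ Finset.Nat.antidiagonalTuple n k) :
    ‖c α‖ * d ^ k ≤ B := by
  set ζ := Complex.exp (2 * Real.pi * Complex.I / (k + 1 : ℕ))
  have hζ : IsPrimitiveRoot ζ (k + 1) := Complex.isPrimitiveRoot_exp _ k.succ_ne_zero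
  have hζ1 : ‖ζ‖ = 1 := hζ.norm'_eq_one k.succ_ne_zero
  have hmem : ∀ j : Fin n → ℕ, (fun i => v i + d * ζ ^ j i) ∈ Metric.closedBall v d := by
    intro j
    refine (mem_closedBall_iff_norm.2 ((pi_norm_le_iff_of_nonneg hd).2 fun i => ?_))
    simp [norm_pow, hζ1, abs_of_nonneg hd]
  have hpos : (0 : ℝ) < (k + 1) ^ n := by positivity
  refine le_of_mul_le_mul_left ?_ hpos
  calc ((k + 1) ^ n : ℝ) * (‖c α‖ * d ^ k) = ‖((k + 1 : ℂ)) ^ n * (c α * d ^ k)‖ := by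
        have hk : ‖(k + 1 : ℂ)‖ = k + 1 := by exact_mod_cast Complex.norm_natCast (k + 1)
        rw [norm_mul, norm_mul, norm_pow, norm_pow, Complex.norm_real, Real.norm_of_nonneg hd, hk]
    _ ≤ ∑ j ∈ Fintype.piFinset fun _ => range (k + 1), B := by
        rw [← hζ.sum_piFinset_homogeneousPart_mul c v d hα]
        refine norm_sum_le_of_le _ fun j _ => ?_
        simpa [norm_prod, norm_pow, hζ1] using hB _ (hmem j)
    _ = (k + 1) ^ n * B := by simp

theorem exists_isOpen_forall_le_mul_pow {X : Type*} [TopologicalSpace X] [BaireSpace X]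
    [Nonempty X] {f : ℕ → X → ℝ} (hf : ∀ k, Continuous (f k))
    (h : ∀ x, ∃ C R, 0 ≤ R ∧ ∀ k, f k x ≤ C * R ^ k) :
    ∃ U : Set X, IsOpen U ∧ U.Nonempty ∧ ∃ C, ∃ R > 0, ∀ x ∈ U, ∀ k, f k x ≤ C * R ^ k := by
  set E : ℕ → Set X := fun m => ⋂ k, {x | f k x ≤ (m + 1) * (m + 1) ^ k}
  have hclosed (m : ℕ) : IsClosed (E m) :=
    isClosed_iInter fun k => isClosed_le (hf k) continuous_const
  have hcover : ⋃ m, E m = Set.univ := by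
    refine Set.eq_univ_of_forall fun x => ?_
    obtain ⟨C, R, hR, hCR⟩ := h x
    obtain ⟨m, hm⟩ := exists_nat_ge (max C R)
    refine Set.mem_iUnion.2 ⟨m, Set.mem_iInter.2 fun k => (hCR k).trans ?_⟩
    have hm1 : max C R ≤ m + 1 := by linarith
    exact mul_le_mul ((le_max_left _ _).trans hm1)
      (pow_le_pow_left₀ hR ((le_max_right _ _).trans hm1) k) (by positivity) (by positivity)
  obtain ⟨m, hm⟩ := nonempty_interior_of_iUnion_of_closed hclosed hcover
  exact ⟨_, isOpen_interior, hm, m + 1, m + 1, by positivity, fun x hx k =>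
    Set.mem_iInter.1 (interior_subset hx) k⟩

theorem le_tsum_mul_pow_mul_inv_pow {a : ℕ → ℝ} (ha : ∀ k, 0 ≤ a k) {ρ : ℝ} (hρ : 0 < ρ)
    (hs : Summable fun k => a k * ρ ^ k) (k : ℕ) :
    a k ≤ (∑' j, a j * ρ ^ j) * ρ⁻¹ ^ k := by
  rw [inv_pow, ← div_eq_mul_inv, le_div_iff₀ (pow_pos hρ k)]
  exact hs.le_tsum k fun j _ => mul_nonneg (ha j) (pow_nonneg hρ.le j)

theorem summable_pow_sum {q : ℝ} (hq0 : 0 ≤ q) (hq1 : q < 1) (n : ℕ) :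
    Summable fun α : Fin n → ℕ => q ^ ∑ i, α i := by
  refine summable_of_sum_le (c := (1 - q)⁻¹ ^ n) (fun α => by positivity) fun u => ?_
  set B := u.sup (fun α => ∑ i, α i) + 1
  have hsub : u ⊆ Fintype.piFinset fun _ => range B := fun α hα =>
    Fintype.mem_piFinset.2 fun i => mem_range.2 <| Nat.lt_succ_of_le <|
      (single_le_sum (fun _ _ => Nat.zero_le _) (mem_univ i)).trans
        (le_sup (f := fun α : Fin n → ℕ => ∑ i, α i) hα)
  calc ∑ α ∈ u, q ^ ∑ i, α i ≤ ∑ α ∈ Fintype.piFinset (fun _ => range B), q ^ ∑ i, α i :=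
        sum_le_sum_of_subset_of_nonneg hsub fun _ _ _ => by positivity
    _ = ∏ _i : Fin n, ∑ s ∈ range B, q ^ s := by
        rw [prod_univ_sum]
        simp_rw [prod_pow_eq_pow_sum]
    _ ≤ (1 - q)⁻¹ ^ n := by
        rw [prod_const, card_univ, Fintype.card_fin]
        refine pow_le_pow_left₀ (sum_nonneg fun _ _ => by positivity) ?_ n
        rw [range_eq_Ico]
        simpa using geom_sum_Ico_le_of_lt_one (m := 0) (n := B) hq0 hq1

theorem summable_norm_mul_pow_of_norm_mul_pow_le {E : Type*} [SeminormedAddCommGroup E] {n : ℕ}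
    {c : (Fin n → ℕ) → E} {d C R : ℝ} (hd : 0 < d) (hR : 0 < R)
    (h : ∀ α, ‖c α‖ * d ^ ∑ i, α i ≤ C * R ^ ∑ i, α i) :
    Summable fun α => ‖c α‖ * (d / (2 * R)) ^ ∑ i, α i := by
  refine ((summable_pow_sum (q := 1 / 2) (by norm_num) (by norm_num) n).mul_left C).of_nonneg_of_le
    (fun α => by positivity) fun α => ?_
  set k := ∑ i, α i
  calc ‖c α‖ * (d / (2 * R)) ^ k = ‖c α‖ * d ^ k * (R ^ k)⁻¹ * (1 / 2) ^ k := by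
        rw [show d / (2 * R) = d * R⁻¹ * (1 / 2) by ring, mul_pow, mul_pow, inv_pow]
        ring
    _ ≤ C * R ^ k * (R ^ k)⁻¹ * (1 / 2) ^ k := by
        gcongr ?_ * _ * _
        exact h α
    _ = C * (1 / 2) ^ k := by field_simp

/-- **Hartogs.** Let `F = Σ_α c_α z^α` be a formal power series in `n`
complex variables. If for every `v ∈ ℂⁿ` the one-variable power series
`Σ_k (Σ_{|α| = k} c_α v^α) λ^k` has positive radius of convergence, then `F` is
convergent: there is `r > 0` with `Σ_α |c_α| r^{|α|} < ∞`. -/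
theorem hartogs_formal_power_series
    (n : ℕ) (c : (Fin n → ℕ) → ℂ)
    (hline : ∀ v : Fin n → ℂ, ∃ ρ : ℝ, 0 < ρ ∧
      Summable fun k : ℕ =>
        ‖∑ α ∈ Finset.Nat.antidiagonalTuple n k,
          c α * ∏ i, (v i) ^ (α i)‖ * ρ ^ k) :
    ∃ r : ℝ, 0 < r ∧
      Summable fun α : Fin n → ℕ => ‖c α‖ * r ^ (∑ i, α i) := by
  have hgeom (v : Fin n → ℂ) : ∃ C R, 0 ≤ R ∧ ∀ k, ‖homogeneousPart c k v‖ ≤ C * R ^ k := by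
    obtain ⟨ρ, hρ, hs⟩ := hline v
    exact ⟨_, ρ⁻¹, inv_nonneg.2 hρ.le, le_tsum_mul_pow_mul_inv_pow (fun _ => norm_nonneg _) hρ hs⟩
  obtain ⟨U, hU, ⟨v, hv⟩, C, R, hR, hbound⟩ :=
    exists_isOpen_forall_le_mul_pow (fun k => (continuous_homogeneousPart c k).norm) hgeom
  obtain ⟨δ, hδ, hball⟩ := Metric.isOpen_iff.1 hU v hv
  have hcoeff (α : Fin n → ℕ) : ‖c α‖ * (δ / 2) ^ ∑ i, α i ≤ C * R ^ ∑ i, α i :=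
    norm_mul_pow_le_of_forall_homogeneousPart_le (by positivity)
      (fun w hw => hbound w (hball (Metric.closedBall_subset_ball (half_lt_self hδ) hw)) _)
      (Finset.Nat.mem_antidiagonalTuple.2 rfl)
  exact ⟨_, by positivity, summable_norm_mul_pow_of_norm_mul_pow_le (by positivity) hR hcoeff⟩
end

section
/- Let Ω ⊂ ℂⁿ be a domain and f : Ω → ℂ holomorphic. If the family ℱ = { f ∘ φ : φ : 𝔻 → Ω holomorphic } is a normal family on the unit disc 𝔻, then there is a finite constant C > 0 such that for all z ∈ Ω and all v ∈ ℂⁿ, |f'(z)(v)|² / (1 + |f(z)|²)² ≤ C · F_K(z, v)², where F_K is the Kobayashi metric of Ω. -/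
/-! By the easy half of Marty's theorem, the spherical derivative `|F'(0)| / (1 + |F(0)|²)` is
bounded, say by `B > 0`, on the normal family `{f ∘ φ}`. For a disc `φ` with `φ(0) = z` and
`φ'(0) = v / α` it equals `|f'(z)(v)| / (α (1 + |f(z)|²))`, so `|f'(z)(v)| / (1 + |f(z)|²) ≤ B α`,
and taking the infimum over `α` gives the bound with `C = B²`. -/

open Metric Set Filter

noncomputable section

/-- A family `𝓕` of functions is a normal family (in the sense of Montel) on `Ω`. -/
def NormalFamilyOn {E : Type*} [NormedAddCommGroup E] [NormedSpace ℂ E]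
    (𝓕 : Set (E → ℂ)) (Ω : Set E) : Prop :=
  ∀ F : ℕ → (E → ℂ), (∀ j, F j ∈ 𝓕) →
    ∃ φ : ℕ → ℕ, StrictMono φ ∧
      ((∃ g : E → ℂ, DifferentiableOn ℂ g Ω ∧
          ∀ K ⊆ Ω, IsCompact K → TendstoUniformlyOn (fun j => F (φ j)) g atTop K) ∨
       (∀ M : ℝ, 0 < M → ∀ K ⊆ Ω, IsCompact K →
          ∀ᶠ j in atTop, ∀ z ∈ K, M ≤ ‖F (φ j) z‖))

/-- The Kobayashi metric of a domain `Ω`: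
`F_K(z, v) = inf {α > 0 : ∃ holomorphic φ : 𝔻 → Ω, φ(0) = z, φ'(0) = v/α}`. -/
def kobayashiMetric {E : Type*} [NormedAddCommGroup E] [NormedSpace ℂ E]
    (Ω : Set E) (z v : E) : ℝ :=
  sInf {α : ℝ | 0 < α ∧ ∃ φ : ℂ → E, DifferentiableOn ℂ φ (ball (0 : ℂ) 1) ∧
    Set.MapsTo φ (ball (0 : ℂ) 1) Ω ∧ φ 0 = z ∧ fderiv ℂ φ 0 1 = (α : ℂ)⁻¹ • v}

def sphericalDeriv (F : ℂ → ℂ) (w : ℂ) : ℝ := ‖deriv F w‖ / (1 + ‖F w‖ ^ 2)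

lemma sphericalDeriv_le_norm_deriv (F : ℂ → ℂ) (w : ℂ) : sphericalDeriv F w ≤ ‖deriv F w‖ :=
  div_le_self (norm_nonneg _) (le_add_of_nonneg_right (by positivity))

lemma sphericalDeriv_le_norm_deriv_inv {F : ℂ → ℂ} {w : ℂ} (hF : DifferentiableAt ℂ F w)
    (hw : F w ≠ 0) : sphericalDeriv F w ≤ ‖deriv F⁻¹ w‖ := by
  rw [deriv_inv'' hF hw, norm_div, norm_neg, norm_pow, sphericalDeriv]
  exact div_le_div_of_nonneg_left (norm_nonneg _) (by positivity) (by linarith)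

lemma tendstoUniformlyOn_inv_zero {α ι 𝕜 : Type*} [NormedDivisionRing 𝕜] {l : Filter ι}
    {F : ι → α → 𝕜} {K : Set α} (hF : ∀ M > 0, ∀ᶠ j in l, ∀ z ∈ K, M ≤ ‖F j z‖) :
    TendstoUniformlyOn (fun j => (F j)⁻¹) 0 l K := by
  refine Metric.tendstoUniformlyOn_iff.2 fun ε hε => ?_
  filter_upwards [hF (2 / ε) (by positivity)] with j hj z hz
  have hinv : ‖F j z‖⁻¹ ≤ ε / 2 := by
    simpa only [inv_div] using inv_anti₀ (by positivity) (hj z hz)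
  rw [Pi.zero_apply, dist_zero_left, Pi.inv_apply, norm_inv]
  linarith

section BoundedSphericalDeriv

variable {ι : Type*} {l : Filter ι} {F : ι → ℂ → ℂ} {U : Set ℂ} {w : ℂ}

lemma isBoundedUnder_sphericalDeriv_of_tendstoLocallyUniformlyOn {g : ℂ → ℂ} (hU : IsOpen U)
    (hw : w ∈ U) (hF : ∀ᶠ j in l, DifferentiableOn ℂ (F j) U)
    (hlim : TendstoLocallyUniformlyOn F g l U) :
    IsBoundedUnder (· ≤ ·) l fun j => sphericalDeriv (F j) w :=
  ((hlim.deriv hF hU).tendsto_at hw).norm.isBoundedUnder_le.mono_le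
    (Eventually.of_forall fun j => sphericalDeriv_le_norm_deriv (F j) w)

/-- When `F j → ∞`, the reciprocals `1 / F j` tend to `0` locally uniformly near `w`, so their
derivatives at `w`, which dominate the spherical derivatives of `F j`, stay bounded. -/
lemma isBoundedUnder_sphericalDeriv_of_tendsto_infty (hU : IsOpen U) (hw : w ∈ U)
    (hF : ∀ j, DifferentiableOn ℂ (F j) U)
    (hdiv : ∀ M > 0, ∀ K ⊆ U, IsCompact K → ∀ᶠ j in l, ∀ z ∈ K, M ≤ ‖F j z‖) :
    IsBoundedUnder (· ≤ ·) l fun j => sphericalDeriv (F j) w := by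
  obtain ⟨r, hr, hrU⟩ := nhds_basis_closedBall.mem_iff.1 (hU.mem_nhds hw)
  have hballU : ball w r ⊆ U := ball_subset_closedBall.trans hrU
  have hne : ∀ᶠ j in l, ∀ z ∈ closedBall w r, F j z ≠ 0 :=
    (hdiv 1 one_pos _ hrU (isCompact_closedBall w r)).mono fun j hj z hz h0 =>
      absurd (hj z hz) (by simp [h0])
  have hinv_diff : ∀ᶠ j in l, DifferentiableOn ℂ (F j)⁻¹ (ball w r) :=
    hne.mono fun j hj => ((hF j).mono hballU).inv fun z hz => hj z (ball_subset_closedBall hz)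
  have hinv_lim : TendstoLocallyUniformlyOn (fun j => (F j)⁻¹) 0 l (ball w r) :=
    (tendstoLocallyUniformlyOn_iff_forall_isCompact isOpen_ball).2 fun K hK hKc =>
      tendstoUniformlyOn_inv_zero fun M hM => hdiv M hM K (hK.trans hballU) hKc
  refine ((hinv_lim.deriv hinv_diff isOpen_ball).tendsto_at
    (mem_ball_self hr)).norm.isBoundedUnder_le.mono_le ?_
  filter_upwards [hne] with j hj
  exact sphericalDeriv_le_norm_deriv_inv ((hF j).differentiableAt (hU.mem_nhds hw))
    (hj w (mem_closedBall_self hr.le))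

end BoundedSphericalDeriv

lemma NormalFamilyOn.bddAbove_sphericalDeriv {𝓕 : Set (ℂ → ℂ)} {U : Set ℂ} {w : ℂ}
    (hnormal : NormalFamilyOn 𝓕 U) (hU : IsOpen U) (hw : w ∈ U)
    (hdiff : ∀ F ∈ 𝓕, DifferentiableOn ℂ F U) :
    BddAbove ((sphericalDeriv · w) '' 𝓕) := by
  by_contra hunbdd
  simp only [not_bddAbove_iff, Set.exists_mem_image] at hunbdd
  choose F hF𝓕 hF using fun j : ℕ => hunbdd j
  obtain ⟨σ, hσ, hcase⟩ := hnormal F hF𝓕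
  have hσ_unbdd : Tendsto (fun j => sphericalDeriv (F (σ j)) w) atTop atTop :=
    tendsto_atTop_mono (fun j => (hF (σ j)).le)
      (tendsto_natCast_atTop_atTop.comp hσ.tendsto_atTop)
  refine not_isBoundedUnder_of_tendsto_atTop hσ_unbdd ?_
  rcases hcase with ⟨g, -, hlim⟩ | hdiv
  · exact isBoundedUnder_sphericalDeriv_of_tendstoLocallyUniformlyOn hU hw
      (Eventually.of_forall fun j => hdiff _ (hF𝓕 _))
      ((tendstoLocallyUniformlyOn_iff_forall_isCompact hU).2 hlim)
  · exact isBoundedUnder_sphericalDeriv_of_tendsto_infty hU hw (fun j => hdiff _ (hF𝓕 _)) hdiv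

section Kobayashi

variable {E : Type*} [NormedAddCommGroup E] [NormedSpace ℂ E]

lemma sphericalDeriv_comp {f : E → ℂ} {φ : ℂ → E} {w : ℂ} (hf : DifferentiableAt ℂ f (φ w))
    (hφ : DifferentiableAt ℂ φ w) :
    sphericalDeriv (f ∘ φ) w = ‖fderiv ℂ f (φ w) (deriv φ w)‖ / (1 + ‖f (φ w)‖ ^ 2) := by
  rw [sphericalDeriv, fderiv_comp_deriv w hf hφ, Function.comp_apply]

lemma norm_fderiv_div_le_of_sphericalDeriv_comp_le {f : E → ℂ} {φ : ℂ → E} {w : ℂ} {v : E}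
    {α B : ℝ} (hf : DifferentiableAt ℂ f (φ w)) (hφ : DifferentiableAt ℂ φ w) (hα : 0 < α)
    (hφ' : deriv φ w = (α : ℂ)⁻¹ • v) (hB : sphericalDeriv (f ∘ φ) w ≤ B) :
    ‖fderiv ℂ f (φ w) v‖ / (1 + ‖f (φ w)‖ ^ 2) ≤ B * α := by
  rwa [sphericalDeriv_comp hf hφ, hφ', map_smul, norm_smul, norm_inv, Complex.norm_real,
    Real.norm_of_nonneg hα.le, mul_div_assoc, inv_mul_le_iff₀ hα, mul_comm] at hB

lemma exists_affine_disc {Ω : Set E} {z : E} (hΩ : IsOpen Ω) (hz : z ∈ Ω) (v : E) :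
    ∃ α : ℝ, 0 < α ∧ ∃ φ : ℂ → E, DifferentiableOn ℂ φ (ball (0 : ℂ) 1) ∧
      MapsTo φ (ball (0 : ℂ) 1) Ω ∧ φ 0 = z ∧ fderiv ℂ φ 0 1 = (α : ℂ)⁻¹ • v := by
  obtain ⟨ε, hε, hεΩ⟩ := Metric.isOpen_iff.1 hΩ z hz
  set α : ℝ := (‖v‖ + 1) / ε
  have hα : 0 < α := by positivity
  have hv : ‖(α : ℂ)⁻¹ • v‖ < ε := by
    rw [norm_smul, norm_inv, Complex.norm_real, Real.norm_of_nonneg hα.le, inv_div,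
      div_mul_eq_mul_div, div_lt_iff₀ (by positivity)]
    nlinarith
  refine ⟨α, hα, fun ζ => z + ζ • (α : ℂ)⁻¹ • v, by fun_prop, fun ζ hζ => hεΩ ?_, by simp, ?_⟩
  · rw [mem_ball, dist_self_add_left, norm_smul]
    rw [mem_ball_zero_iff] at hζ
    nlinarith [norm_nonneg ζ, norm_nonneg ((α : ℂ)⁻¹ • v)]
  · rw [fderiv_apply_one_eq_deriv]
    simpa using (((hasDerivAt_id (0 : ℂ)).smul_const ((α : ℂ)⁻¹ • v)).const_add z).deriv

lemma le_kobayashiMetric {Ω : Set E} {z v : E} {t : ℝ} (hΩ : IsOpen Ω) (hz : z ∈ Ω)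
    (h : ∀ α : ℝ, 0 < α → ∀ φ : ℂ → E, DifferentiableOn ℂ φ (ball (0 : ℂ) 1) →
      MapsTo φ (ball (0 : ℂ) 1) Ω → φ 0 = z → fderiv ℂ φ 0 1 = (α : ℂ)⁻¹ • v → t ≤ α) :
    t ≤ kobayashiMetric Ω z v := by
  obtain ⟨α, hα, φ, hφ⟩ := exists_affine_disc hΩ hz v
  exact le_csInf ⟨α, hα, φ, hφ⟩ fun α ⟨hα, φ, hφ, hφΩ, hφ0, hφ'⟩ => h α hα φ hφ hφΩ hφ0 hφ'

end Kobayashi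

theorem kobayashi_bound_of_normal_family_general
    (n : ℕ) (Ω : Set (EuclideanSpace ℂ (Fin n)))
    (hΩopen : IsOpen Ω)
    (f : EuclideanSpace ℂ (Fin n) → ℂ)
    (hf : DifferentiableOn ℂ f Ω)
    (hnormal : NormalFamilyOn
      {F : ℂ → ℂ | ∃ φ : ℂ → EuclideanSpace ℂ (Fin n),
        DifferentiableOn ℂ φ (ball (0 : ℂ) 1) ∧
        Set.MapsTo φ (ball (0 : ℂ) 1) Ω ∧ F = f ∘ φ}
      (ball (0 : ℂ) 1)) :
    ∃ C : ℝ, 0 < C ∧ ∀ z ∈ Ω, ∀ v : EuclideanSpace ℂ (Fin n),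
      ‖fderiv ℂ f z v‖ ^ 2 / (1 + ‖f z‖ ^ 2) ^ 2 ≤
        C * (kobayashiMetric Ω z v) ^ 2 := by
  have h0 : (0 : ℂ) ∈ ball (0 : ℂ) 1 := mem_ball_self one_pos
  obtain ⟨B, hB⟩ := hnormal.bddAbove_sphericalDeriv isOpen_ball h0
    (by rintro _ ⟨φ, hφ, hφΩ, rfl⟩; exact hf.comp hφ hφΩ)
  refine ⟨max B 1 ^ 2, by positivity, fun z hz v => ?_⟩
  have hbound : ‖fderiv ℂ f z v‖ / (1 + ‖f z‖ ^ 2) / max B 1 ≤ kobayashiMetric Ω z v := by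
    refine le_kobayashiMetric hΩopen hz fun α hα φ hφ hφΩ hφ0 hφ' => ?_
    subst hφ0
    rw [div_le_iff₀ (by positivity), mul_comm]
    refine norm_fderiv_div_le_of_sphericalDeriv_comp_le (hf.differentiableAt (hΩopen.mem_nhds hz))
      (hφ.differentiableAt (isOpen_ball.mem_nhds h0)) hα (by rwa [← fderiv_apply_one_eq_deriv])
      ((hB ⟨f ∘ φ, ⟨φ, hφ, hφΩ, rfl⟩, rfl⟩).trans (le_max_left B 1))
  rw [div_le_iff₀ (by positivity)] at hbound
  calc ‖fderiv ℂ f z v‖ ^ 2 / (1 + ‖f z‖ ^ 2) ^ 2 = (‖fderiv ℂ f z v‖ / (1 + ‖f z‖ ^ 2)) ^ 2 := by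
        rw [div_pow]
    _ ≤ (kobayashiMetric Ω z v * max B 1) ^ 2 := by gcongr
    _ = max B 1 ^ 2 * kobayashiMetric Ω z v ^ 2 := by ring

/-- If `f` is holomorphic on a domain `Ω ⊂ ℂⁿ` and the family
`{f ∘ φ : φ : 𝔻 → Ω holomorphic}` is normal on the unit disc, then the Levi form of
`log(1+|f|²)` is bounded by a constant multiple of the square of the Kobayashi metric. -/
theorem kobayashi_bound_of_normal_family
    (n : ℕ) (Ω : Set (EuclideanSpace ℂ (Fin n)))
    (hΩopen : IsOpen Ω) (hΩconn : IsConnected Ω)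
    (f : EuclideanSpace ℂ (Fin n) → ℂ)
    (hf : DifferentiableOn ℂ f Ω)
    (hnormal : NormalFamilyOn
      {F : ℂ → ℂ | ∃ φ : ℂ → EuclideanSpace ℂ (Fin n),
        DifferentiableOn ℂ φ (ball (0 : ℂ) 1) ∧
        Set.MapsTo φ (ball (0 : ℂ) 1) Ω ∧ F = f ∘ φ}
      (ball (0 : ℂ) 1)) :
    ∃ C : ℝ, 0 < C ∧ ∀ z ∈ Ω, ∀ v : EuclideanSpace ℂ (Fin n),
      ‖fderiv ℂ f z v‖ ^ 2 / (1 + ‖f z‖ ^ 2) ^ 2 ≤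
        C * (kobayashiMetric Ω z v) ^ 2 :=
  kobayashi_bound_of_normal_family_general n Ω hΩopen f hf hnormal
end
end

section
/- Let X be a convex subset of a real normed vector space, let (Y, dist) be a metric space, let M ≥ 0, and let f : X → Y be continuous. If for every x ∈ X one has limsup_{z → x, z ∈ X} dist(f(x), f(z)) / ‖x − z‖ ≤ M, then f is Lipschitz with constant M: dist(f(a), f(b)) ≤ M · ‖a − b‖ for all a, b ∈ X. -/
open Filter Topology

/-- Let `X` be a convex subset of a real normed vector space, `Y` a
metric space, `M ≥ 0`, and `f` continuous on `X`. If at every `x ∈ X` we have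
`limsup_{z → x, z ∈ X} dist(f(x), f(z))/‖x − z‖ ≤ M` (i.e. for every `μ > M` the bound
`dist(f(x), f(z)) ≤ μ‖x − z‖` holds for `z ∈ X` near `x`), then `f` is Lipschitz with
constant `M` on `X`. -/
theorem lipschitz_of_local_limsup_bound
    {E : Type*} [NormedAddCommGroup E] [NormedSpace ℝ E]
    {Y : Type*} [MetricSpace Y]
    (X : Set E) (hX : Convex ℝ X)
    (f : E → Y) (hf : ContinuousOn f X)
    (M : ℝ) (hM : 0 ≤ M)
    (hlim : ∀ x ∈ X, ∀ μ : ℝ, M < μ →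
      ∀ᶠ z in nhdsWithin x X, dist (f x) (f z) ≤ μ * ‖x - z‖) :
    ∀ a ∈ X, ∀ b ∈ X, dist (f a) (f b) ≤ M * ‖a - b‖ := by
  intro a ha b hb
  have key : ∀ μ : ℝ, M < μ → dist (f a) (f b) ≤ μ * ‖a - b‖ := by
    intro μ hμ
    have hμ0 : 0 < μ := lt_of_le_of_lt hM hμ
    set γ : ℝ → E := fun t => a + t • (b - a) with hγ
    have hγX : ∀ t ∈ Set.Icc (0 : ℝ) 1, γ t ∈ X := by
      intro t ht
      have h := hX ha hb (by linarith [ht.2] : (0:ℝ) ≤ 1 - t) ht.1 (by ring)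
      convert h using 1
      simp only [γ]
      module
    have hγcont : Continuous γ := by continuity
    have hdiff : ∀ s t : ℝ, ‖γ s - γ t‖ = |s - t| * ‖b - a‖ := by
      intro s t
      have : γ s - γ t = (s - t) • (b - a) := by simp only [γ]; module
      rw [this, norm_smul, Real.norm_eq_abs]
    set S : Set ℝ := {t : ℝ | dist (f a) (f (γ t)) ≤ μ * (t * ‖b - a‖)} with hS
    have hclosed : IsClosed (S ∩ Set.Icc 0 1) := by
      have hcont : ContinuousOn (fun t => dist (f a) (f (γ t)) - μ * (t * ‖b - a‖))
          (Set.Icc (0:ℝ) 1) := by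
        apply ContinuousOn.sub
        · exact (continuous_const.dist continuous_id).comp_continuousOn
            (hf.comp hγcont.continuousOn hγX)
        · fun_prop
      have := hcont.preimage_isClosed_of_isClosed isClosed_Icc (isClosed_Iic (a := (0:ℝ)))
      have heq : S ∩ Set.Icc 0 1 = Set.Icc (0:ℝ) 1 ∩
          ((fun t => dist (f a) (f (γ t)) - μ * (t * ‖b - a‖)) ⁻¹' Set.Iic 0) := by
        ext t
        simp only [Set.mem_inter_iff, Set.mem_preimage, Set.mem_Iic, Set.mem_setOf_eq, hS,
          sub_nonpos, and_comm]
      rw [heq]; exact this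
    have h0S : (0:ℝ) ∈ S := by simp [hS, γ]
    have hstep : ∀ t ∈ S ∩ Set.Ico 0 1, ∀ y ∈ Set.Ioi t, (S ∩ Set.Ioc t y).Nonempty := by
      rintro t ⟨htS, ht0, ht1⟩ y hy
      have htX : γ t ∈ X := hγX t ⟨ht0, le_of_lt ht1⟩
      have hten : Filter.Tendsto γ (nhdsWithin t (Set.Icc 0 1)) (nhdsWithin (γ t) X) :=
        (hγcont.continuousWithinAt).tendsto_nhdsWithin hγX
      have hev : ∀ᶠ t' in nhdsWithin t (Set.Icc 0 1),
          dist (f (γ t)) (f (γ t')) ≤ μ * ‖γ t - γ t'‖ :=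
        hten.eventually (hlim (γ t) htX μ hμ)
      set m := min y 1 with hm
      have htm : t < m := lt_min hy ht1
      have hsub : Set.Ioc t m ⊆ Set.Icc (0:ℝ) 1 := fun s hs =>
        ⟨le_trans ht0 (le_of_lt hs.1), le_trans hs.2 (min_le_right _ _)⟩
      have hle : nhdsWithin t (Set.Ioc t m) ≤ nhdsWithin t (Set.Icc 0 1) :=
        nhdsWithin_mono t hsub
      have hnb : (nhdsWithin t (Set.Ioc t m)).NeBot := by
        rw [nhdsWithin_Ioc_eq_nhdsGT htm]; infer_instance
      have hev' : ∀ᶠ t' in nhdsWithin t (Set.Ioc t m),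
          dist (f (γ t)) (f (γ t')) ≤ μ * ‖γ t - γ t'‖ ∧ t' ∈ Set.Ioc t m :=
        (hev.filter_mono hle).and self_mem_nhdsWithin
      obtain ⟨t', ht'bd, ht'mem⟩ := hev'.exists
      refine ⟨t', ?_, ht'mem.1, le_trans ht'mem.2 (min_le_left _ _)⟩
      have h1 : dist (f a) (f (γ t')) ≤ dist (f a) (f (γ t)) + dist (f (γ t)) (f (γ t')) :=
        dist_triangle _ _ _
      have h2 : μ * ‖γ t - γ t'‖ = μ * ((t' - t) * ‖b - a‖) := by
        rw [hdiff, abs_sub_comm, abs_of_pos (by linarith [ht'mem.1])]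
      simp only [hS, Set.mem_setOf_eq]
      calc dist (f a) (f (γ t')) ≤ μ * (t * ‖b - a‖) + μ * ((t' - t) * ‖b - a‖) := by
            rw [← h2]; exact le_trans h1 (add_le_add htS ht'bd)
        _ = μ * (t' * ‖b - a‖) := by ring
    have h1S : (1:ℝ) ∈ S :=
      hclosed.Icc_subset_of_forall_exists_gt h0S hstep ⟨zero_le_one, le_refl 1⟩
    have hγ1 : γ 1 = b := by simp [γ]
    have := h1S
    simp only [hS, Set.mem_setOf_eq, hγ1, one_mul] at this
    rwa [norm_sub_rev] at this
  have hten : Filter.Tendsto (fun μ : ℝ => μ * ‖a - b‖) (nhdsWithin M (Set.Ioi M))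
      (nhds (M * ‖a - b‖)) :=
    ((continuous_id.mul continuous_const).tendsto M).mono_left nhdsWithin_le_nhds
  exact ge_of_tendsto hten (eventually_nhdsWithin_of_forall fun μ hμ => key μ hμ)
end
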